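/- arXiv:1501.04101 — 2 statements merged into one kernel-verified Lean document; each statement's English description precedes it below -/
import Mathlib

section
/- The function m ↦ K(m)/E(m) − (2 + m)/2 is strictly increasing on the interval [0, 1). -/
open Real Filter

/-- Complete elliptic integral of the first kind, `K(m)`. -/
noncomputable def ellK (m : ℝ) : ℝ :=
  ∫ t in (0:ℝ)..(π/2), 1 / Real.sqrt (1 - m * Real.sin t ^ 2)

/-- Complete elliptic integral of the second kind, `E(m)`. -/
noncomputable def ellE (m : ℝ) : ℝ :=
  ∫ t in (0:ℝ)..(π/2), Real.sqrt (1 - m * Real.sin t ^ 2)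

/-- Complete elliptic integral of the third kind, `Π(n, m)`. -/
noncomputable def ellPi (n m : ℝ) : ℝ :=
  ∫ t in (0:ℝ)..(π/2), 1 / ((1 - n * Real.sin t ^ 2) * Real.sqrt (1 - m * Real.sin t ^ 2))

/-- The constant `μ(a,b)`. -/
noncomputable def muC (a b : ℝ) : ℝ :=
  Real.sqrt ((a + b + Real.sqrt (4 + (a - b) ^ 2)) / 2)

/-- The constant `ν(a,b)`. -/
noncomputable def nuC (a b : ℝ) : ℝ :=
  Real.sqrt ((a + b - Real.sqrt (4 + (a - b) ^ 2)) / 2)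

/-- First component `Φ₁` of the period map. -/
noncomputable def Phi1 (a b : ℝ) : ℝ :=
  muC a b * ellPi ((a - b) / (a - muC a b ^ 2)) ((a - b) / a) /
    (π * Real.sqrt a * (a - muC a b ^ 2))

/-- Second component `Φ₂` of the period map. -/
noncomputable def Phi2 (a b : ℝ) : ℝ :=
  nuC a b * ellPi ((a - b) / (a - nuC a b ^ 2)) ((a - b) / a) /
    (π * Real.sqrt a * (a - nuC a b ^ 2))

/-- The parameter domain `Σ = {(a,b) : a > b, ab > 1}`. -/
def SigmaSet : Set (ℝ × ℝ) := {p | p.1 > p.2 ∧ p.1 * p.2 > 1}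

/-- The domain `Ω̃ = {(x,y) : -1/√2 < x < -1/2, x² + y² < 1/2, y > 0}`. -/
def OmegaSet : Set (ℝ × ℝ) :=
  {p | -(1 / Real.sqrt 2) < p.1 ∧ p.1 < -(1/2) ∧ p.1 ^ 2 + p.2 ^ 2 < 1/2 ∧ p.2 > 0}

/-! Differentiating under the integral sign, the derivative of `K/E - (2 + m)/2` is positive
exactly when `K' E - K E' > E² / 2`. For `0 < m < 1`, comparing the integrands of `K'` and `-E'`
with `sin² t / 2` gives `K' ≥ π/8` and `-E' ≥ π/8`; together with `E ≤ K` this yields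
`K' E - K E' ≥ π E / 4`, which exceeds `E² / 2` because `E < π/2`. -/

open Set

lemma one_sub_mul_mem_Icc {m x s : ℝ} (hs : |s| ≤ 1) (hm : |m| < 1)
    (hx : x ∈ Metric.ball m ((1 - |m|) / 2)) : 1 - x * s ∈ Icc ((1 - |m|) / 2) 2 := by
  have hxs : |x * s| ≤ |x| := by
    rw [abs_mul]
    exact mul_le_of_le_one_right (abs_nonneg x) hs
  have hx' : |x| < |m| + (1 - |m|) / 2 := by
    rw [Metric.mem_ball, Real.dist_eq] at hx
    linarith [abs_sub_abs_le_abs_sub x m]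
  constructor <;> linarith [le_abs_self (x * s), neg_abs_le (x * s)]

theorem hasDerivAt_intervalIntegral_comp_one_sub_mul {φ φ' g : ℝ → ℝ} {a b m : ℝ}
    (hφ : ∀ y > 0, HasDerivAt φ (φ' y) y) (hφ' : ContinuousOn φ' (Ioi 0))
    (hg : Continuous g) (hg1 : ∀ t, |g t| ≤ 1) (hm : |m| < 1) :
    HasDerivAt (fun x => ∫ t in a..b, φ (1 - x * g t))
      (-∫ t in a..b, g t * φ' (1 - m * g t)) m := by
  have hδ : 0 < (1 - |m|) / 2 := by linarith
  set δ := (1 - |m|) / 2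
  have hball : ∀ x ∈ Metric.ball m δ, ∀ t, 1 - x * g t ∈ Icc δ 2 := fun x hx t =>
    one_sub_mul_mem_Icc (hg1 t) hm hx
  have hIcc : Icc δ 2 ⊆ Ioi 0 := fun y hy => hδ.trans_le hy.1
  obtain ⟨C, hC⟩ := isCompact_Icc.exists_bound_of_continuousOn (hφ'.mono hIcc)
  have hcont : ∀ x ∈ Metric.ball m δ, Continuous fun t => φ (1 - x * g t) := fun x hx =>
    continuous_iff_continuousAt.2 fun t =>
      (hφ _ (hIcc (hball x hx t))).continuousAt.comp (f := fun t => 1 - x * g t) (by fun_prop)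
  have hm_mem : m ∈ Metric.ball m δ := Metric.mem_ball_self hδ
  have H := intervalIntegral.hasDerivAt_integral_of_dominated_loc_of_deriv_le
    (F := fun x t => φ (1 - x * g t)) (F' := fun x t => -(g t * φ' (1 - x * g t)))
    (μ := MeasureTheory.volume) (a := a) (b := b) (bound := fun _ => C)
    (Metric.ball_mem_nhds m hδ)
    (eventually_of_mem (Metric.ball_mem_nhds m hδ) fun x hx =>
      (hcont x hx).aestronglyMeasurable)
    ((hcont m hm_mem).intervalIntegrable _ _)
    ((hg.mul (hφ'.comp_continuous (by fun_prop) fun t => hIcc (hball m hm_mem t))).neg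
      |>.aestronglyMeasurable)
    (Eventually.of_forall fun t _ x hx => by
      rw [norm_neg, norm_mul, Real.norm_eq_abs]
      calc _ ≤ 1 * C := mul_le_mul (hg1 t) (hC _ (hball x hx t)) (norm_nonneg _) zero_le_one
        _ = C := one_mul C)
    intervalIntegrable_const
    (Eventually.of_forall fun t _ x hx => by
      have h := (hφ _ (hIcc (hball x hx t))).comp x ((hasDerivAt_mul_const (g t)).const_sub 1)
      rw [mul_neg, mul_comm] at h
      exact h)
  simpa only [intervalIntegral.integral_neg] using H.2

lemma one_sub_mul_sin_sq_pos {m : ℝ} (hm : m < 1) (t : ℝ) : 0 < 1 - m * sin t ^ 2 := by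
  rcases le_or_gt m 0 with hm₀ | hm₀
  · nlinarith [sq_nonneg (sin t)]
  · nlinarith [sin_sq_le_one t]

lemma one_sub_mul_sin_sq_le_one {m : ℝ} (hm : 0 ≤ m) (t : ℝ) : 1 - m * sin t ^ 2 ≤ 1 := by
  nlinarith [sq_nonneg (sin t)]

lemma abs_sin_sq_le_one (t : ℝ) : |sin t ^ 2| ≤ 1 := by
  rw [abs_of_nonneg (sq_nonneg _)]
  exact sin_sq_le_one t

lemma hasDerivAt_one_div_sqrt {y : ℝ} (hy : 0 < y) :
    HasDerivAt (fun y => 1 / √y) (-1 / (2 * (y * √y))) y := by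
  have h := (hasDerivAt_sqrt hy.ne').inv (sqrt_pos.2 hy).ne'
  rw [sq_sqrt hy.le] at h
  simp only [one_div]
  refine h.congr_deriv ?_
  field_simp

noncomputable def ellKDeriv (m : ℝ) : ℝ :=
  ∫ t in (0:ℝ)..(π/2), sin t ^ 2 / (2 * ((1 - m * sin t ^ 2) * √(1 - m * sin t ^ 2)))

noncomputable def ellEDeriv (m : ℝ) : ℝ :=
  -∫ t in (0:ℝ)..(π/2), sin t ^ 2 / (2 * √(1 - m * sin t ^ 2))

lemma hasDerivAt_ellK {m : ℝ} (hm : |m| < 1) : HasDerivAt ellK (ellKDeriv m) m := by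
  refine (hasDerivAt_intervalIntegral_comp_one_sub_mul (fun y hy => hasDerivAt_one_div_sqrt hy)
    (ContinuousOn.div continuousOn_const (by fun_prop) fun y (hy : 0 < y) => by positivity)
    (by fun_prop) abs_sin_sq_le_one hm).congr_deriv ?_
  rw [ellKDeriv, ← intervalIntegral.integral_neg]
  congr 1 with t
  ring

lemma hasDerivAt_ellE {m : ℝ} (hm : |m| < 1) : HasDerivAt ellE (ellEDeriv m) m := by
  refine (hasDerivAt_intervalIntegral_comp_one_sub_mul (fun y hy => hasDerivAt_sqrt hy.ne')
    (ContinuousOn.div continuousOn_const (by fun_prop) fun y (hy : 0 < y) => by positivity)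
    (by fun_prop) abs_sin_sq_le_one hm).congr_deriv ?_
  rw [ellEDeriv]
  congr 2 with t
  ring

lemma pi_div_eight_le_integral_sin_sq_div {d : ℝ → ℝ} (hd : Continuous d) (hd₀ : ∀ t, 0 < d t)
    (hd₁ : ∀ t, d t ≤ 1) : π / 8 ≤ ∫ t in (0:ℝ)..(π/2), sin t ^ 2 / (2 * d t) := by
  have hint : ∫ t in (0:ℝ)..(π/2), sin t ^ 2 / 2 = π / 8 := by
    rw [intervalIntegral.integral_div, integral_sin_sq, sin_zero, cos_pi_div_two]
    ring
  rw [← hint]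
  refine intervalIntegral.integral_mono_on (by positivity)
    (Continuous.intervalIntegrable (by fun_prop) _ _)
    (Continuous.intervalIntegrable
      (by fun_prop (disch := exact fun t => by linarith [hd₀ t])) _ _) fun t _ => ?_
  have := hd₀ t
  exact div_le_div_of_nonneg_left (sq_nonneg _) (by positivity) (by linarith [hd₁ t])

section

variable {m : ℝ}

lemma ellE_pos (hm : m < 1) : 0 < ellE m :=
  intervalIntegral.intervalIntegral_pos_of_pos_on (Continuous.intervalIntegrable (by fun_prop) _ _)
    (fun t _ => sqrt_pos.2 (one_sub_mul_sin_sq_pos hm t)) (by positivity)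

lemma ellE_lt_pi_div_two (hm : 0 < m) : ellE m < π / 2 := by
  have h := intervalIntegral.integral_lt_integral_of_continuousOn_of_le_of_exists_lt
    (f := fun t => √(1 - m * sin t ^ 2)) (g := fun _ => 1) (by positivity)
    (by fun_prop) continuousOn_const
    (fun t _ => sqrt_le_one.2 (one_sub_mul_sin_sq_le_one hm.le t))
    ⟨π / 2, right_mem_Icc.2 (by positivity), by simp [sqrt_lt' one_pos, hm]⟩
  simpa [ellE] using h

lemma ellE_le_ellK (hm₀ : 0 ≤ m) (hm₁ : m < 1) : ellE m ≤ ellK m := by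
  have hpos := one_sub_mul_sin_sq_pos hm₁
  refine intervalIntegral.integral_mono_on (by positivity)
    (Continuous.intervalIntegrable (by fun_prop) _ _)
    (Continuous.intervalIntegrable
      (by fun_prop (disch := exact fun t => (sqrt_pos.2 (hpos t)).ne')) _ _) fun t _ => ?_
  have h₀ := sqrt_pos.2 (hpos t)
  have h₁ := sqrt_le_one.2 (one_sub_mul_sin_sq_le_one hm₀ t)
  rw [le_div_iff₀ h₀]
  nlinarith

lemma pi_div_eight_le_ellKDeriv (hm₀ : 0 ≤ m) (hm₁ : m < 1) : π / 8 ≤ ellKDeriv m := by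
  have hpos := one_sub_mul_sin_sq_pos hm₁
  refine pi_div_eight_le_integral_sin_sq_div (by fun_prop)
    (fun t => mul_pos (hpos t) (sqrt_pos.2 (hpos t))) fun t => ?_
  exact mul_le_one₀ (one_sub_mul_sin_sq_le_one hm₀ t) (sqrt_nonneg _)
    (sqrt_le_one.2 (one_sub_mul_sin_sq_le_one hm₀ t))

lemma ellEDeriv_le_neg_pi_div_eight (hm₀ : 0 ≤ m) (hm₁ : m < 1) : ellEDeriv m ≤ -(π / 8) :=
  neg_le_neg <| pi_div_eight_le_integral_sin_sq_div (by fun_prop)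
    (fun t => sqrt_pos.2 (one_sub_mul_sin_sq_pos hm₁ t))
    fun t => sqrt_le_one.2 (one_sub_mul_sin_sq_le_one hm₀ t)

lemma ellE_sq_div_two_lt (hm₀ : 0 < m) (hm₁ : m < 1) :
    ellE m ^ 2 / 2 < ellKDeriv m * ellE m - ellK m * ellEDeriv m := by
  have hE := ellE_pos hm₁
  have hEK := ellE_le_ellK hm₀.le hm₁
  calc ellE m ^ 2 / 2 < π / 8 * ellE m + ellE m * (π / 8) := by
        nlinarith [ellE_lt_pi_div_two hm₀]
    _ ≤ ellKDeriv m * ellE m + ellK m * -ellEDeriv m := by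
        gcongr
        · exact pi_div_eight_le_ellKDeriv hm₀.le hm₁
        · linarith
        · linarith [ellEDeriv_le_neg_pi_div_eight hm₀.le hm₁]
    _ = ellKDeriv m * ellE m - ellK m * ellEDeriv m := by ring

end

/-- The function `m ↦ K(m)/E(m) - (2 + m)/2` is strictly increasing on `[0, 1)`. -/
theorem stmt_2 :
    StrictMonoOn (fun m : ℝ => ellK m / ellE m - (2 + m) / 2) (Set.Ico 0 1) := by
  have hderiv : ∀ m ∈ Ico (0 : ℝ) 1, HasDerivAt (fun m : ℝ => ellK m / ellE m - (2 + m) / 2)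
      ((ellKDeriv m * ellE m - ellK m * ellEDeriv m) / ellE m ^ 2 - 1 / 2) m := by
    intro m hm
    have habs : |m| < 1 := abs_lt.2 ⟨by linarith [hm.1], hm.2⟩
    exact ((hasDerivAt_ellK habs).div (hasDerivAt_ellE habs) (ellE_pos hm.2).ne').sub
      (((hasDerivAt_id m).const_add 2).div_const 2 |>.congr_deriv (by simp))
  refine strictMonoOn_of_hasDerivWithinAt_pos (convex_Ico 0 1)
    (fun m hm => (hderiv m hm).continuousAt.continuousWithinAt)
    (fun m hm => (hderiv m (interior_subset hm)).hasDerivWithinAt) fun m hm => ?_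
  rw [interior_Ico] at hm
  rw [sub_pos, lt_div_iff₀ (pow_pos (ellE_pos hm.2) 2)]
  linarith [ellE_sq_div_two_lt hm.1 hm.2]
end

section
/- For every point (x, y) ∈ Ω̃, the level set {(a,b) ∈ Σ : Φ₂(a,b) = y} is a connected subset of ℝ². -/
open Real Filter

open Set Topology

/-!
In the coordinates `a = ν² + β⁻¹`, `b = ν² + β` (with `ν = ν(a,b) > 0`, `0 < β < 1`) the part
of `Σ` where `Φ₂` can be positive becomes `(0, ∞) × (0, 1)`, and `Φ₂` becomes
`Ψ(ν, β) = π⁻¹ ∫₀^{π/2} ν / (e √(ν² + e)) dt` with `e = β⁻¹ cos² t + β sin² t`.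
For fixed `β`, `Ψ` is continuous and strictly increasing in `ν`, vanishes at `ν = 0` and
approaches `π⁻¹ ∫₀^{π/2} e⁻¹ dt = 1/2` as `ν → ∞`. On `Ω̃` we have `0 < y < 1/2`, so `Ψ(·, β) = y`
has exactly one solution `g(β)`, which depends continuously on `β`; the level set is then the
image of `(0, 1)` under `β ↦ (g(β)² + β⁻¹, g(β)² + β)`.
-/

noncomputable def trigMix (β t : ℝ) : ℝ := β⁻¹ * cos t ^ 2 + β * sin t ^ 2

lemma Continuous.trigMix {X : Type*} [TopologicalSpace X] {f g : X → ℝ} (hf : Continuous f)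
    (hg : Continuous g) (hf0 : ∀ x, f x ≠ 0) : Continuous fun x => trigMix (f x) (g x) :=
  ((hf.inv₀ hf0).mul (by fun_prop)).add (hf.mul (by fun_prop))

lemma continuous_trigMix {β : ℝ} (hβ : β ≠ 0) : Continuous (trigMix β) :=
  continuous_const.trigMix continuous_id fun _ => hβ

lemma mul_cos_sq_add_mul_sin_sq_pos {p q : ℝ} (hp : 0 < p) (hq : 0 < q) (t : ℝ) :
    0 < p * cos t ^ 2 + q * sin t ^ 2 := by
  have hm : 0 < min p q := lt_min hp hq
  nlinarith [sin_sq_add_cos_sq t, min_le_left p q, min_le_right p q, sq_nonneg (sin t),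
    sq_nonneg (cos t)]

lemma trigMix_pos {β : ℝ} (hβ : 0 < β) (t : ℝ) : 0 < trigMix β t :=
  mul_cos_sq_add_mul_sin_sq_pos (inv_pos.2 hβ) hβ t

lemma trigMix_le {β : ℝ} (hβ : 0 < β) (t : ℝ) : trigMix β t ≤ β⁻¹ + β := by
  have := inv_pos.2 hβ
  unfold trigMix
  nlinarith [sin_sq_le_one t, cos_sq_le_one t]

/-- This is `arctan (β tan u)` rewritten with the arctan subtraction formula, which makes it
continuous across `u = π / 2`. -/
lemma hasDerivAt_primitive_inv_trigMix {β : ℝ} (hβ : 0 < β) (t : ℝ) :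
    HasDerivAt (fun u => u + arctan ((β - 1) * (sin u * cos u) / (cos u ^ 2 + β * sin u ^ 2)))
      (trigMix β t)⁻¹ t := by
  have hD : cos t ^ 2 + β * sin t ^ 2 ≠ 0 := by
    simpa using (mul_cos_sq_add_mul_sin_sq_pos one_pos hβ t).ne'
  have hE : cos t ^ 2 + β ^ 2 * sin t ^ 2 ≠ 0 := by
    simpa using (mul_cos_sq_add_mul_sin_sq_pos one_pos (pow_pos hβ 2) t).ne'
  have hq := (((hasDerivAt_sin t).mul (hasDerivAt_cos t)).const_mul (β - 1)).div
    (((hasDerivAt_cos t).pow 2).add (((hasDerivAt_sin t).pow 2).const_mul β)) hD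
  refine ((hasDerivAt_id t).add hq.arctan).congr_deriv ?_
  simp only [trigMix, Pi.div_apply, Pi.add_apply, Pi.mul_apply, Pi.pow_apply, Nat.cast_ofNat,
    Nat.add_one_sub_one, pow_one]
  field_simp
  rw [cos_sq']
  ring

lemma integral_inv_trigMix {β : ℝ} (hβ : 0 < β) :
    ∫ t in (0 : ℝ)..(π / 2), (trigMix β t)⁻¹ = π / 2 := by
  have hcont : Continuous fun t => (trigMix β t)⁻¹ :=
    (continuous_trigMix hβ.ne').inv₀ fun t => (trigMix_pos hβ t).ne'
  rw [intervalIntegral.integral_eq_sub_of_hasDerivAt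
    (fun t _ => hasDerivAt_primitive_inv_trigMix hβ t) (hcont.intervalIntegrable _ _)]
  simp

lemma strictMonoOn_div_sqrt_sq_add {e : ℝ} (he : 0 < e) :
    StrictMonoOn (fun ν => ν / √(ν ^ 2 + e)) (Ici 0) := by
  intro ν₁ (h₁ : 0 ≤ ν₁) ν₂ (h₂ : 0 ≤ ν₂) h
  have hs₁ : 0 < √(ν₁ ^ 2 + e) := sqrt_pos.2 (by positivity)
  have hs₂ : 0 < √(ν₂ ^ 2 + e) := sqrt_pos.2 (by positivity)
  rw [div_lt_div_iff₀ hs₁ hs₂]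
  refine lt_of_pow_lt_pow_left₀ 2 (by positivity) ?_
  rw [mul_pow, mul_pow, sq_sqrt (by positivity), sq_sqrt (by positivity)]
  nlinarith [mul_lt_mul_of_pos_right (pow_lt_pow_left₀ h h₁ two_ne_zero) he]

lemma exists_lt_div_sqrt_sq_add {c M : ℝ} (hc₀ : 0 ≤ c) (hc₁ : c < 1) (hM : 0 ≤ M) :
    ∃ ν, 0 ≤ ν ∧ c < ν / √(ν ^ 2 + M) := by
  set ν := (M + 1) / (1 - c ^ 2)
  have hc2 : 0 < 1 - c ^ 2 := by nlinarith
  have hν : ν * (1 - c ^ 2) = M + 1 := div_mul_cancel₀ _ hc2.ne'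
  have hν₀ : 0 < ν := by positivity
  have hνM : M + 1 ≤ ν := by nlinarith
  refine ⟨ν, hν₀.le, (lt_div_iff₀ (sqrt_pos.2 (by positivity))).2 ?_⟩
  refine lt_of_pow_lt_pow_left₀ 2 hν₀.le ?_
  rw [mul_pow, sq_sqrt (by positivity)]
  nlinarith [mul_le_mul_of_nonneg_right (pow_le_one₀ hc₀ hc₁.le (n := 2)) hM]

lemma ContinuousOn.of_strictMonoOn_of_apply_eq {X : Type*} [TopologicalSpace X] {S : Set X}
    {I : Set ℝ} (hI : IsOpen I) {H : ℝ → X → ℝ} {g : X → ℝ} {y : ℝ}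
    (hmono : ∀ x ∈ S, StrictMonoOn (H · x) I) (hcont : ∀ ν ∈ I, ContinuousOn (H ν) S)
    (hgI : ∀ x ∈ S, g x ∈ I) (hg : ∀ x ∈ S, H (g x) x = y) : ContinuousOn g S := by
  intro x₀ hx₀
  have hI₀ : I ∈ 𝓝 (g x₀) := hI.mem_nhds (hgI x₀ hx₀)
  have hS : ∀ᶠ x in 𝓝[S] x₀, x ∈ S := self_mem_nhdsWithin
  refine tendsto_order.2 ⟨fun c hc => ?_, fun c hc => ?_⟩
  · obtain ⟨d, ⟨hcd, hdg⟩, hdI⟩ := Filter.nonempty_of_mem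
      (inter_mem (Ioo_mem_nhdsLT hc) (mem_nhdsWithin_of_mem_nhds hI₀))
    have hd : H d x₀ < y := hg x₀ hx₀ ▸ hmono x₀ hx₀ hdI (hgI x₀ hx₀) hdg
    filter_upwards [(hcont d hdI x₀ hx₀).eventually_lt_const hd, hS] with x hx hxS
    by_contra! hle
    have := (hmono x hxS).monotoneOn (hgI x hxS) hdI (hle.trans hcd.le)
    linarith [hg x hxS]
  · obtain ⟨d, ⟨hgd, hdc⟩, hdI⟩ := Filter.nonempty_of_mem
      (inter_mem (Ioo_mem_nhdsGT hc) (mem_nhdsWithin_of_mem_nhds hI₀))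
    have hd : y < H d x₀ := hg x₀ hx₀ ▸ hmono x₀ hx₀ (hgI x₀ hx₀) hdI hgd
    filter_upwards [(hcont d hdI x₀ hx₀).eventually_const_lt hd, hS] with x hx hxS
    by_contra! hle
    have := (hmono x hxS).monotoneOn hdI (hgI x hxS) (hdc.le.trans hle)
    linarith [hg x hxS]

lemma Continuous.div_sqrt_sq_add_div {X : Type*} [TopologicalSpace X] {f g : X → ℝ}
    (hf : Continuous f) (hg : Continuous g) (hg0 : ∀ x, 0 < g x) :
    Continuous fun x => f x / √(f x ^ 2 + g x) / g x :=
  (hf.div (by fun_prop) fun x => (sqrt_pos.2 (by positivity [hg0 x])).ne').div hg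
    fun x => (hg0 x).ne'

noncomputable def Psi (ν β : ℝ) : ℝ :=
  π⁻¹ * ∫ t in (0 : ℝ)..(π / 2), ν / √(ν ^ 2 + trigMix β t) / trigMix β t

lemma continuous_Psi_integrand {β : ℝ} (hβ : 0 < β) (ν : ℝ) :
    Continuous fun t => ν / √(ν ^ 2 + trigMix β t) / trigMix β t :=
  continuous_const.div_sqrt_sq_add_div (continuous_trigMix hβ.ne') (trigMix_pos hβ)

lemma Psi_zero (β : ℝ) : Psi 0 β = 0 := by simp [Psi]

lemma continuousOn_uncurry_Psi : ContinuousOn (Function.uncurry Psi) {p | 0 < p.2} := by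
  rw [continuousOn_iff_continuous_domRestrict]
  refine continuous_const.mul
    (intervalIntegral.continuous_parametric_intervalIntegral_of_continuous' ?_ _ _)
  exact Continuous.div_sqrt_sq_add_div (by fun_prop)
    (Continuous.trigMix (by fun_prop) continuous_snd fun p => p.1.2.ne')
    fun p => trigMix_pos p.1.2 p.2

lemma continuous_Psi_left {β : ℝ} (hβ : 0 < β) : Continuous (Psi · β) :=
  continuousOn_uncurry_Psi.comp_continuous (continuous_id.prodMk continuous_const) fun _ => hβ

lemma continuousOn_Psi_right (ν : ℝ) : ContinuousOn (Psi ν) (Ioi 0) :=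
  continuousOn_uncurry_Psi.comp (f := fun β => (ν, β)) (by fun_prop) fun _ h => h

lemma strictMonoOn_Psi {β : ℝ} (hβ : 0 < β) : StrictMonoOn (Psi · β) (Ici 0) := by
  intro ν₁ h₁ ν₂ h₂ h
  have hlt (t : ℝ) := div_lt_div_of_pos_right
    (strictMonoOn_div_sqrt_sq_add (trigMix_pos hβ t) h₁ h₂ h) (trigMix_pos hβ t)
  exact mul_lt_mul_of_pos_left
    (intervalIntegral.integral_lt_integral_of_continuousOn_of_le_of_exists_lt (by positivity)
      (continuous_Psi_integrand hβ ν₁).continuousOn (continuous_Psi_integrand hβ ν₂).continuousOn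
      (fun t _ => (hlt t).le) ⟨0, left_mem_Icc.2 (by positivity), hlt 0⟩)
    (inv_pos.2 pi_pos)

lemma div_sqrt_sq_add_div_two_le_Psi {ν β : ℝ} (hβ : 0 < β) (hν : 0 ≤ ν) :
    ν / √(ν ^ 2 + (β⁻¹ + β)) / 2 ≤ Psi ν β := by
  set C := ν / √(ν ^ 2 + (β⁻¹ + β))
  have hle (t : ℝ) : C * (trigMix β t)⁻¹ ≤ ν / √(ν ^ 2 + trigMix β t) / trigMix β t := by
    have he := trigMix_pos hβ t
    rw [← div_eq_mul_inv]
    refine div_le_div_of_nonneg_right (div_le_div_of_nonneg_left hν (sqrt_pos.2 ?_) ?_) he.le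
    · positivity
    · exact sqrt_le_sqrt (by linarith [trigMix_le hβ t])
  have hinv : Continuous fun t => (trigMix β t)⁻¹ :=
    (continuous_trigMix hβ.ne').inv₀ fun t => (trigMix_pos hβ t).ne'
  have hint := intervalIntegral.integral_mono_on (μ := MeasureTheory.volume)
    (a := 0) (b := π / 2) (by positivity) ((hinv.const_mul C).intervalIntegrable _ _)
    ((continuous_Psi_integrand hβ ν).intervalIntegrable _ _) fun t _ => hle t
  rw [intervalIntegral.integral_const_mul, integral_inv_trigMix hβ] at hint
  calc C / 2 = π⁻¹ * (C * (π / 2)) := by field_simp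
    _ ≤ Psi ν β := mul_le_mul_of_nonneg_left hint (inv_pos.2 pi_pos).le

lemma exists_Psi_eq {β y : ℝ} (hβ : 0 < β) (hy₀ : 0 < y) (hy₁ : y < 1 / 2) :
    ∃ ν, 0 < ν ∧ Psi ν β = y := by
  obtain ⟨ν₁, hν₁, hlt⟩ := exists_lt_div_sqrt_sq_add (c := 2 * y) (by positivity) (by linarith)
    (by positivity : 0 ≤ β⁻¹ + β)
  have hy : y ∈ Icc (Psi 0 β) (Psi ν₁ β) := by
    refine ⟨by rw [Psi_zero]; exact hy₀.le, ?_⟩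
    linarith [div_sqrt_sq_add_div_two_le_Psi hβ hν₁]
  obtain ⟨ν, hν, rfl⟩ := intermediate_value_Icc hν₁ (continuous_Psi_left hβ).continuousOn hy
  refine ⟨ν, lt_of_le_of_ne hν.1 ?_, rfl⟩
  rintro rfl
  exact hy₀.ne' (Psi_zero β)

lemma nuC_reparam {ν β : ℝ} (hν : 0 ≤ ν) (hβ : 0 < β) : nuC (ν ^ 2 + β⁻¹) (ν ^ 2 + β) = ν := by
  have h4 : 4 + (ν ^ 2 + β⁻¹ - (ν ^ 2 + β)) ^ 2 = (β⁻¹ + β) ^ 2 := by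
    field_simp; ring
  rw [nuC, h4, sqrt_sq (by positivity)]
  ring_nf
  exact sqrt_sq hν

lemma Phi2_reparam {ν β : ℝ} (hν : 0 ≤ ν) (hβ : 0 < β) :
    Phi2 (ν ^ 2 + β⁻¹) (ν ^ 2 + β) = Psi ν β := by
  set a := ν ^ 2 + β⁻¹
  have ha : 0 < a := by positivity
  have hPi (t : ℝ) : 1 / ((1 - (a - (ν ^ 2 + β)) / (a - ν ^ 2) * sin t ^ 2) *
      √(1 - (a - (ν ^ 2 + β)) / a * sin t ^ 2)) =
      √a * β⁻¹ * (1 / √(ν ^ 2 + trigMix β t) / trigMix β t) := by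
    have he := trigMix_pos hβ t
    have h₁ : 1 - (a - (ν ^ 2 + β)) / (a - ν ^ 2) * sin t ^ 2 = β * trigMix β t := by
      simp only [a, trigMix]
      field_simp
      linear_combination -sin_sq_add_cos_sq t
    have h₂ : 1 - (a - (ν ^ 2 + β)) / a * sin t ^ 2 = (ν ^ 2 + trigMix β t) / a := by
      simp only [a, trigMix]
      field_simp
      linear_combination -sin_sq_add_cos_sq t
    rw [h₁, h₂, sqrt_div (by positivity)]
    field_simp
  have hPsi : Psi ν β =
      π⁻¹ * (ν * ∫ t in (0 : ℝ)..(π / 2), 1 / √(ν ^ 2 + trigMix β t) / trigMix β t) := by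
    rw [Psi]
    congr 1
    rw [← intervalIntegral.integral_const_mul]
    exact intervalIntegral.integral_congr fun t _ => by ring
  rw [Phi2, ellPi, nuC_reparam hν hβ, intervalIntegral.integral_congr fun t _ => hPi t,
    intervalIntegral.integral_const_mul, hPsi, show a - ν ^ 2 = β⁻¹ by ring]
  field_simp

lemma reparam_mem_SigmaSet {ν β : ℝ} (hν : 0 < ν) (hβ : β ∈ Ioo 0 1) :
    (ν ^ 2 + β⁻¹, ν ^ 2 + β) ∈ SigmaSet := by
  obtain ⟨hβ₀, hβ₁⟩ := hβ
  have hinv : 1 < β⁻¹ := one_lt_inv₀ hβ₀ |>.2 hβ₁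
  have hprod : β * β⁻¹ = 1 := mul_inv_cancel₀ hβ₀.ne'
  constructor
  · show ν ^ 2 + β < ν ^ 2 + β⁻¹
    linarith
  · show 1 < (ν ^ 2 + β⁻¹) * (ν ^ 2 + β)
    nlinarith [pow_pos hν 2]

lemma Phi2_eq_zero_of_add_nonpos {a b : ℝ} (h : a + b ≤ 0) : Phi2 a b = 0 := by
  rw [Phi2, nuC, sqrt_eq_zero'.2 (by linarith [sqrt_nonneg (4 + (a - b) ^ 2)])]
  simp

lemma exists_reparam_of_mem_SigmaSet {a b : ℝ} (h : (a, b) ∈ SigmaSet) (hab : 0 < a + b) :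
    ∃ ν, 0 < ν ∧ ∃ β ∈ Ioo (0 : ℝ) 1, a = ν ^ 2 + β⁻¹ ∧ b = ν ^ 2 + β := by
  obtain ⟨hgt, hprod⟩ := h
  set s := √(4 + (a - b) ^ 2)
  have hs : s ^ 2 = 4 + (a - b) ^ 2 := sq_sqrt (by positivity)
  have hs₀ : 0 ≤ s := sqrt_nonneg _
  have hs_lt : s < a + b := lt_of_pow_lt_pow_left₀ 2 hab.le (by nlinarith)
  have hs_gt : a - b < s := lt_of_pow_lt_pow_left₀ 2 hs₀ (by nlinarith)
  have hs_lt' : s < 2 + (a - b) := lt_of_pow_lt_pow_left₀ 2 (by linarith) (by nlinarith)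
  set ν := nuC a b
  have hν : ν ^ 2 = (a + b - s) / 2 := sq_sqrt (by linarith)
  refine ⟨ν, sqrt_pos.2 (by linarith), b - ν ^ 2, ⟨by linarith, by linarith⟩, ?_, by ring⟩
  have : (a - ν ^ 2) * (b - ν ^ 2) = 1 := by rw [hν]; linear_combination hs / 4
  linarith [eq_inv_of_mul_eq_one_left this]

lemma levelSet_Phi2_eq_image {y : ℝ} (hy : 0 < y) {g : ℝ → ℝ}
    (hg_pos : ∀ β ∈ Ioo (0 : ℝ) 1, 0 < g β) (hg : ∀ β ∈ Ioo (0 : ℝ) 1, Psi (g β) β = y) :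
    {p : ℝ × ℝ | p ∈ SigmaSet ∧ Phi2 p.1 p.2 = y} =
      (fun β => (g β ^ 2 + β⁻¹, g β ^ 2 + β)) '' Ioo 0 1 := by
  ext ⟨a, b⟩
  constructor
  · rintro ⟨hmem, hPhi⟩
    have hab : 0 < a + b := by
      by_contra! h
      exact hy.ne' (hPhi ▸ Phi2_eq_zero_of_add_nonpos h)
    obtain ⟨ν, hν, β, hβ, rfl, rfl⟩ := exists_reparam_of_mem_SigmaSet hmem hab
    rw [Phi2_reparam hν.le hβ.1] at hPhi
    have hνg : ν = g β := (strictMonoOn_Psi hβ.1).injOn hν.le (hg_pos β hβ).le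
      (hPhi.trans (hg β hβ).symm)
    exact ⟨β, hβ, by rw [hνg]⟩
  · rintro ⟨β, hβ, hab⟩
    rw [← hab]
    exact ⟨reparam_mem_SigmaSet (hg_pos β hβ) hβ,
      (Phi2_reparam (hg_pos β hβ).le hβ.1).trans (hg β hβ)⟩

/-- For every `(x, y) ∈ Ω̃`, the level set `{(a,b) ∈ Σ : Φ₂(a,b) = y}` is a connected
subset of `ℝ²`. -/
theorem stmt_15 (x y : ℝ) (h : (x, y) ∈ OmegaSet) :
    IsConnected {p : ℝ × ℝ | p ∈ SigmaSet ∧ Phi2 p.1 p.2 = y} := by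
  obtain ⟨-, hx, hxy, hy⟩ := h
  have hy' : y < 1 / 2 := by nlinarith
  choose! g hg_pos hg using fun β (hβ : β ∈ Ioo (0 : ℝ) 1) => exists_Psi_eq hβ.1 hy hy'
  have hg_cont : ContinuousOn g (Ioo 0 1) :=
    .of_strictMonoOn_of_apply_eq isOpen_Ioi
      (fun β hβ => (strictMonoOn_Psi hβ.1).mono Ioi_subset_Ici_self)
      (fun ν _ => (continuousOn_Psi_right ν).mono Ioo_subset_Ioi_self) hg_pos hg
  rw [levelSet_Phi2_eq_image hy hg_pos hg]
  exact (isConnected_Ioo one_pos).image _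
    (((hg_cont.pow 2).add (continuousOn_id.inv₀ fun β hβ => hβ.1.ne')).prodMk
      ((hg_cont.pow 2).add continuousOn_id))
end
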